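/- arXiv:2306.10523 — 7 statements merged into one kernel-verified Lean document; each statement's English description precedes it below -/
import Mathlib

section
/- Let I₁,…,I_k be closed bounded intervals, f : ℝ → ℝ continuous, with f(I₁ ∪ … ∪ I_k) ⊇ I₁ ∪ … ∪ I_k. Suppose that for all x ∈ I₁ ∪ … ∪ I_k and all 1 ≤ l ≤ k we have f^[l](x) ≠ x. Then there exists δ > 0 such that for every continuous g : ℝ → ℝ with sup_{x∈ℝ} |g(x) − f(x)| < δ, it also holds that g^[l](x) ≠ x for all 1 ≤ l ≤ k and all x ∈ I₁ ∪ … ∪ I_k. -/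
private noncomputable def myseq (e0 : ℝ) (step : ℝ → ℝ) : ℕ → ℝ
  | 0 => e0
  | n + 1 => step (myseq e0 step n)

/-- If a covering system has no periodic point of period ≤ k in the union of its intervals,
then the same holds for every continuous map `g` uniformly `δ`-close to `f`. -/
theorem no_periodic_points_stable_under_perturbation (k : ℕ) (hk : 1 ≤ k)
    (a b : Fin k → ℝ) (hab : ∀ i, a i ≤ b i)
    (f : ℝ → ℝ) (hf : Continuous f)
    (hcov : (⋃ i, Set.Icc (a i) (b i)) ⊆ f '' ⋃ i, Set.Icc (a i) (b i))
    (hnoper : ∀ x ∈ ⋃ i, Set.Icc (a i) (b i), ∀ l : ℕ, 1 ≤ l → l ≤ k → f^[l] x ≠ x) :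
    ∃ δ > (0 : ℝ), ∀ g : ℝ → ℝ, Continuous g → (∀ x : ℝ, |g x - f x| < δ) →
      ∀ x ∈ ⋃ i, Set.Icc (a i) (b i), ∀ l : ℕ, 1 ≤ l → l ≤ k → g^[l] x ≠ x := by
  classical
  set S : Set ℝ := ⋃ i, Set.Icc (a i) (b i) with hS
  have hScomp : IsCompact S := isCompact_iUnion fun i => isCompact_Icc
  have hSne : S.Nonempty :=
    ⟨a ⟨0, hk⟩, Set.mem_iUnion.2 ⟨⟨0, hk⟩, Set.left_mem_Icc.2 (hab _)⟩⟩
  -- lower bound for each period l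
  have hε1 : ∀ l : ℕ, 1 ≤ l → l ≤ k → ∃ e > 0, ∀ x ∈ S, e ≤ |f^[l] x - x| := by
    intro l h1 h2
    have hc : ContinuousOn (fun x => |f^[l] x - x|) S :=
      (((hf.iterate l).sub continuous_id).abs).continuousOn
    obtain ⟨x₀, hx₀S, hx₀⟩ := hScomp.exists_isMinOn hSne hc
    exact ⟨_, abs_pos.2 (sub_ne_zero.2 (hnoper x₀ hx₀S l h1 h2)), fun x hx => hx₀ hx⟩
  have hε2 : ∀ l : ℕ, ∃ e : ℝ, 0 < e ∧ (1 ≤ l → l ≤ k → ∀ x ∈ S, e ≤ |f^[l] x - x|) := by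
    intro l
    by_cases h : 1 ≤ l ∧ l ≤ k
    · obtain ⟨e, he, hb⟩ := hε1 l h.1 h.2
      exact ⟨e, he, fun _ _ => hb⟩
    · exact ⟨1, one_pos, fun h1 h2 => absurd ⟨h1, h2⟩ h⟩
  choose e hepos hebd using hε2
  have hne : (Finset.Icc 1 k).Nonempty := ⟨1, Finset.mem_Icc.2 ⟨le_refl 1, hk⟩⟩
  set ε : ℝ := (Finset.Icc 1 k).inf' hne e with hεdef
  have hεpos : 0 < ε := by
    rw [hεdef, Finset.lt_inf'_iff]
    intro l _
    exact hepos l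
  have hεle : ∀ l, 1 ≤ l → l ≤ k → ∀ x ∈ S, ε ≤ |f^[l] x - x| := by
    intro l h1 h2 x hx
    exact le_trans (Finset.inf'_le e (Finset.mem_Icc.2 ⟨h1, h2⟩)) (hebd l h1 h2 x hx)
  -- compact set containing all iterates
  set K : Set ℝ := ⋃ j : Fin (k + 1), f^[(j : ℕ)] '' S with hKdef
  have hKcomp : IsCompact K := isCompact_iUnion fun j => hScomp.image (hf.iterate _)
  set C : Set ℝ := Metric.cthickening 1 K with hCdef
  have hCcomp : IsCompact C := hKcomp.cthickening
  have hKC : K ⊆ C := Metric.self_subset_cthickening _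
  have hUC := hCcomp.uniformContinuousOn_of_continuous hf.continuousOn
  rw [Metric.uniformContinuousOn_iff] at hUC
  -- modulus of continuity
  have hmod : ∀ e : ℝ, 0 < e → ∃ d, 0 < d ∧ d ≤ e / 2 ∧
      ∀ u v : ℝ, v ∈ K → |u - v| ≤ 1 → |u - v| < d → |f u - f v| < e / 2 := by
    intro e he
    obtain ⟨d, hd, hspec⟩ := hUC (e / 2) (by linarith)
    refine ⟨min d (e / 2), lt_min hd (by linarith), min_le_right _ _, ?_⟩
    intro u v hv h1 hlt
    have hu : u ∈ C := Metric.mem_cthickening_of_dist_le u v 1 K hv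
      (by rw [Real.dist_eq]; exact h1)
    have := hspec u hu v (hKC hv)
      (by rw [Real.dist_eq]; exact hlt.trans_le (min_le_left _ _))
    rwa [Real.dist_eq] at this
  set step : ℝ → ℝ := fun x => if h : 0 < x then Classical.choose (hmod x h) else 1
    with hstepdef
  set t : ℕ → ℝ := myseq (min ε 1) step with htdef
  have htsucc : ∀ m, t (m + 1) = step (t m) := fun m => rfl
  have htpos : ∀ m, 0 < t m := by
    intro m
    induction m with
    | zero => exact lt_min hεpos one_pos
    | succ m ih =>
      rw [htsucc, hstepdef]
      simp only [dif_pos ih]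
      exact (Classical.choose_spec (hmod (t m) ih)).1
  have hthalf : ∀ m, t (m + 1) ≤ t m / 2 := by
    intro m
    rw [htsucc, hstepdef]
    simp only [dif_pos (htpos m)]
    exact (Classical.choose_spec (hmod (t m) (htpos m))).2.1
  have htspec : ∀ m, ∀ u v : ℝ, v ∈ K → |u - v| ≤ 1 → |u - v| < t (m + 1) →
      |f u - f v| < t m / 2 := by
    intro m u v hv h1 hlt
    rw [htsucc, hstepdef] at hlt
    simp only [dif_pos (htpos m)] at hlt
    exact (Classical.choose_spec (hmod (t m) (htpos m))).2.2 u v hv h1 hlt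
  have htmono : ∀ m n, m ≤ n → t n ≤ t m := by
    intro m n hmn
    induction n with
    | zero => exact le_of_eq (congrArg t (show 0 = m by omega))
    | succ n ih =>
      rcases Nat.lt_or_ge m (n + 1) with h | h
      · have h1 : t n ≤ t m := ih (by omega)
        have := hthalf n
        have := htpos n
        linarith
      · have : m = n + 1 := by omega
        subst this
        exact le_refl _
  have htle1 : ∀ m, t m ≤ 1 := fun m =>
    le_trans (htmono 0 m (Nat.zero_le _)) (min_le_right _ _)
  have htleε : ∀ m, t m ≤ ε := fun m =>
    le_trans (htmono 0 m (Nat.zero_le _)) (min_le_left _ _)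
  refine ⟨t k, htpos k, ?_⟩
  intro g hg hgf x hx l h1 h2
  -- key induction on iterates
  have key : ∀ j, j ≤ k → |g^[j] x - f^[j] x| < t (k - j) := by
    intro j
    induction j with
    | zero => intro _; simpa using htpos k
    | succ j ih =>
      intro hjk
      have hj : j ≤ k := Nat.le_of_succ_le hjk
      have IH := ih hj
      set m := k - (j + 1) with hm
      have hkj : k - j = m + 1 := by omega
      rw [hkj] at IH
      have hvK : f^[j] x ∈ K :=
        Set.mem_iUnion.2 ⟨⟨j, by omega⟩, Set.mem_image_of_mem _ hx⟩
      have h1' : |g^[j] x - f^[j] x| ≤ 1 := IH.le.trans (htle1 _)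
      have hff : |f (g^[j] x) - f (f^[j] x)| < t m / 2 := htspec m _ _ hvK h1' IH
      have hgu : |g (g^[j] x) - f (g^[j] x)| < t k := hgf (g^[j] x)
      have hδ : t k ≤ t m / 2 := le_trans (htmono (m + 1) k (by omega)) (hthalf m)
      rw [Function.iterate_succ_apply', Function.iterate_succ_apply']
      calc |g (g^[j] x) - f (f^[j] x)|
          ≤ |g (g^[j] x) - f (g^[j] x)| + |f (g^[j] x) - f (f^[j] x)| := by
            have := abs_sub_le (g (g^[j] x)) (f (g^[j] x)) (f (f^[j] x))
            linarith [this]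
        _ < t k + t m / 2 := by linarith
        _ ≤ t m := by linarith
  have hfin := key l h2
  have hεb := hεle l h1 h2 x hx
  intro heq
  rw [heq] at hfin
  have h3 : t (k - l) ≤ ε := htleε _
  rw [abs_sub_comm] at hfin
  linarith
end

section
/- Let σ be an n-cycle in Sₙ. With A_i = {i,i+1} and m_i = min{m ≥ 1 : (convσ)^m(A_i) ⊇ A_i}, every characteristic number satisfies m_i ≤ n − 1. -/
/-- `convPerm σ A` is the set of integers between `min σ(A)` and `max σ(A)` inclusive
(and `∅` if `A = ∅`). -/
def convPerm {N : ℕ} (σ : Equiv.Perm (Fin N)) (A : Finset (Fin N)) : Finset (Fin N) :=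
  if h : A.Nonempty then
    Finset.Icc ((A.image σ).min' (h.image σ)) ((A.image σ).max' (h.image σ))
  else ∅

/-- `pairA i = {i, i+1}`, the 0-indexed version of `A_i = {i, i+1} ⊆ {1,…,n}`;
the ambient set `{1,…,n}` is modelled by `Fin (n+1)` and the index set `{1,…,n-1}` by `Fin n`. -/
def pairA {n : ℕ} (i : Fin n) : Finset (Fin (n + 1)) := {i.castSucc, i.succ}

/-- `σ` is a full cycle on its (finite) domain, i.e. an `N`-cycle in `S_N`. -/
def IsNCycle {N : ℕ} (σ : Equiv.Perm (Fin N)) : Prop :=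
  σ.IsCycle ∧ σ.support = Finset.univ

/-- The characteristic number `m_i = min {m ≥ 1 : (convσ)^m(A_i) ⊇ A_i}`. -/
noncomputable def charNum {n : ℕ} (σ : Equiv.Perm (Fin (n + 1))) (i : Fin n) : ℕ :=
  sInf {m : ℕ | 1 ≤ m ∧ pairA i ⊆ (convPerm σ)^[m] (pairA i)}

lemma image_subset_convPerm {N : ℕ} (σ : Equiv.Perm (Fin N)) (A : Finset (Fin N)) :
    A.image σ ⊆ convPerm σ A := by
  rcases A.eq_empty_or_nonempty with rfl | h
  · simp [convPerm]
  · rw [convPerm, dif_pos h]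
    intro x hx
    exact Finset.mem_Icc.2 ⟨Finset.min'_le _ _ hx, Finset.le_max' _ _ hx⟩

lemma convPerm_mono {N : ℕ} (σ : Equiv.Perm (Fin N)) {A B : Finset (Fin N)}
    (hA : A.Nonempty) (hAB : A ⊆ B) : convPerm σ A ⊆ convPerm σ B := by
  have hB := hA.mono hAB
  rw [convPerm, dif_pos hA, convPerm, dif_pos hB]
  exact Finset.Icc_subset_Icc
    (Finset.min'_le _ _ (Finset.image_subset_image hAB (Finset.min'_mem _ _)))
    (Finset.le_max' _ _ (Finset.image_subset_image hAB (Finset.max'_mem _ _)))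

lemma image_pow_subset {N : ℕ} (σ : Equiv.Perm (Fin N)) {A : Finset (Fin N)}
    (hA : A.Nonempty) (m : ℕ) : A.image ⇑(σ ^ m) ⊆ (convPerm σ)^[m] A := by
  induction m with
  | zero => simp
  | succ m ih =>
    have h1 : A.image ⇑(σ ^ (m + 1)) = (A.image ⇑(σ ^ m)).image σ := by
      rw [pow_succ', Equiv.Perm.coe_mul, ← Finset.image_image]
    rw [Function.iterate_succ_apply', h1]
    exact (Finset.image_subset_image ih).trans (image_subset_convPerm σ _)

lemma convPerm_convex {N : ℕ} (σ : Equiv.Perm (Fin N)) {A : Finset (Fin N)} {x y z : Fin N}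
    (hx : x ∈ convPerm σ A) (hy : y ∈ convPerm σ A) (hxz : x ≤ z) (hzy : z ≤ y) :
    z ∈ convPerm σ A := by
  rcases A.eq_empty_or_nonempty with rfl | h
  · simp [convPerm] at hx
  · rw [convPerm, dif_pos h] at hx hy ⊢
    rw [Finset.mem_Icc] at hx hy ⊢
    exact ⟨hx.1.trans hxz, hzy.trans hy.2⟩

/-- Sharkovskii-type bound (`m_i ≤ n - 1` with the paper's `n`, which is `n+1` here):
every characteristic number of an `(n+1)`-cycle is at most `n`. -/
theorem char_number_le (n : ℕ) (hn : 1 ≤ n) (σ : Equiv.Perm (Fin (n + 1)))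
    (hσ : IsNCycle σ) (i : Fin n) :
    ∃ m : ℕ, 1 ≤ m ∧ m ≤ n ∧ pairA i ⊆ (convPerm σ)^[m] (pairA i) := by
  set a := i.castSucc with ha
  set b := i.succ with hb
  have hab : a < b := Fin.castSucc_lt_succ
  have hmoves : ∀ x : Fin (n + 1), σ x ≠ x := by
    intro x
    have hx : x ∈ σ.support := hσ.2 ▸ Finset.mem_univ x
    exact Equiv.Perm.mem_support.1 hx
  have horder : orderOf σ = n + 1 := by
    rw [hσ.1.orderOf, hσ.2, Finset.card_univ, Fintype.card_fin]
  have hinj : ∀ x : Fin (n + 1),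
      Function.Injective (fun m : Fin (n + 1) => (σ ^ (m : ℕ)) x) := by
    intro x j k h
    have hpow : σ ^ (j : ℕ) = σ ^ (k : ℕ) := hσ.1.pow_eq_pow_iff.2 ⟨x, hmoves x, h⟩
    have := pow_injOn_Iio_orderOf (x := σ)
      (by rw [horder]; exact Set.mem_Iio.2 j.isLt)
      (by rw [horder]; exact Set.mem_Iio.2 k.isLt) hpow
    exact Fin.ext this
  have hsurj : ∀ x : Fin (n + 1),
      Function.Surjective (fun m : Fin (n + 1) => (σ ^ (m : ℕ)) x) :=
    fun x => Finite.surjective_of_injective (hinj x)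
  have hcount : ∀ x : Fin (n + 1),
      (Finset.univ.filter (fun m : Fin (n + 1) => (σ ^ (m : ℕ)) x ≤ a)).card
        = (Finset.univ.filter (fun z : Fin (n + 1) => z ≤ a)).card := by
    intro x
    refine Finset.card_bij (fun m _ => (σ ^ (m : ℕ)) x) ?_ ?_ ?_
    · intro m hm
      simp only [Finset.mem_filter, Finset.mem_univ, true_and] at hm ⊢
      exact hm
    · intro j hj k hk h
      exact hinj x h
    · intro z hz
      obtain ⟨m, hm⟩ := hsurj x z
      refine ⟨m, ?_, hm⟩
      simp only [Finset.mem_filter, Finset.mem_univ, true_and] at hz ⊢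
      simp only [] at hm
      rw [show (σ ^ (m : ℕ)) x = z from hm]; exact hz
  have key : ∃ m : ℕ, 1 ≤ m ∧ m ≤ n ∧ ¬(((σ ^ m) a ≤ a) ↔ ((σ ^ m) b ≤ a)) := by
    by_contra hcon
    simp only [not_exists, not_and, not_not] at hcon
    have hfa : (Finset.univ.filter (fun m : Fin (n + 1) => (σ ^ (m : ℕ)) a ≤ a))
        = insert (0 : Fin (n + 1))
            (Finset.univ.filter (fun m : Fin (n + 1) => (σ ^ (m : ℕ)) b ≤ a)) := by
      ext m
      simp only [Finset.mem_filter, Finset.mem_univ, true_and, Finset.mem_insert]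
      constructor
      · intro hm
        rcases eq_or_ne m 0 with rfl | hm0
        · exact Or.inl rfl
        · refine Or.inr ?_
          have h1 : 1 ≤ (m : ℕ) := Nat.one_le_iff_ne_zero.2 (fun h => hm0 (Fin.ext h))
          have h2 : (m : ℕ) ≤ n := Nat.lt_succ_iff.1 m.isLt
          exact (hcon (m : ℕ) h1 h2).1 hm
      · rintro (rfl | hm)
        · simp
        · rcases eq_or_ne m 0 with rfl | hm0
          · simp only [Fin.val_zero, pow_zero, Equiv.Perm.coe_one, id_eq] at hm
            exact absurd hm (not_le.2 hab)
          · have h1 : 1 ≤ (m : ℕ) := Nat.one_le_iff_ne_zero.2 (fun h => hm0 (Fin.ext h))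
            have h2 : (m : ℕ) ≤ n := Nat.lt_succ_iff.1 m.isLt
            exact (hcon (m : ℕ) h1 h2).2 hm
    have h0notin : (0 : Fin (n + 1)) ∉
        Finset.univ.filter (fun m : Fin (n + 1) => (σ ^ (m : ℕ)) b ≤ a) := by
      simp only [Finset.mem_filter, Finset.mem_univ, true_and, Fin.val_zero, pow_zero,
        Equiv.Perm.coe_one, id_eq]
      exact not_le.2 hab
    have hcard := Finset.card_insert_of_notMem h0notin
    rw [← hfa, hcount a, hcount b] at hcard
    omega
  obtain ⟨m, hm1, hmn, hsplit⟩ := key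
  refine ⟨m, hm1, hmn, ?_⟩
  obtain ⟨k, rfl⟩ : ∃ k, m = k + 1 := ⟨m - 1, by omega⟩
  have hamem : a ∈ pairA i := by simp [pairA, ha]
  have hbmem : b ∈ pairA i := by simp [pairA, hb]
  have hmema : (σ ^ (k + 1)) a ∈ (convPerm σ)^[k + 1] (pairA i) :=
    image_pow_subset σ ⟨a, hamem⟩ (k + 1) (Finset.mem_image_of_mem _ hamem)
  have hmemb : (σ ^ (k + 1)) b ∈ (convPerm σ)^[k + 1] (pairA i) :=
    image_pow_subset σ ⟨a, hamem⟩ (k + 1) (Finset.mem_image_of_mem _ hbmem)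
  rw [Function.iterate_succ_apply'] at hmema hmemb ⊢
  have hdich : ∀ z : Fin (n + 1), ¬(z ≤ a) → b ≤ z := by
    intro z hz
    exact (Fin.castSucc_lt_iff_succ_le).1 (not_le.1 hz)
  have hsub : ∃ x y : Fin (n + 1), x ∈ convPerm σ ((convPerm σ)^[k] (pairA i)) ∧
      y ∈ convPerm σ ((convPerm σ)^[k] (pairA i)) ∧ x ≤ a ∧ b ≤ y := by
    by_cases hA : (σ ^ (k + 1)) a ≤ a
    · by_cases hB : (σ ^ (k + 1)) b ≤ a
      · exact absurd (iff_of_true hA hB) hsplit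
      · exact ⟨_, _, hmema, hmemb, hA, hdich _ hB⟩
    · by_cases hB : (σ ^ (k + 1)) b ≤ a
      · exact ⟨_, _, hmemb, hmema, hB, hdich _ hA⟩
      · exact absurd (iff_of_false hA hB) hsplit
  obtain ⟨x, y, hx, hy, hxa, hby⟩ := hsub
  intro w hw
  rw [pairA, Finset.mem_insert, Finset.mem_singleton] at hw
  rcases hw with rfl | rfl
  · exact convPerm_convex σ hx hy hxa (hab.le.trans hby)
  · exact convPerm_convex σ hx hy (hxa.trans hab.le) hby
end

section
/- Let n ≥ 2 and let σ ∈ Sₙ be the cycle defined by σ(i) ≡ i + 1 (mod n) (on {1,…,n}). Then the multiset of characteristic numbers {m₁,…,m_{n−1}} of σ equals {1,2,…,n−1}. -/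
lemma conv_pair {N : ℕ} (σ : Equiv.Perm (Fin N)) (a b : Fin N) (hab : σ a ≤ σ b) :
    convPerm σ {a, b} = Finset.Icc (σ a) (σ b) := by
  have hne : ({a, b} : Finset (Fin N)).Nonempty := ⟨a, by simp⟩
  rw [convPerm, dif_pos hne]
  have himg : ({a, b} : Finset (Fin N)).image σ = {σ a, σ b} := by
    simp [Finset.image_insert]
  congr 1
  · apply le_antisymm
    · apply Finset.min'_le; rw [himg]; simp
    · apply Finset.le_min'; intro y hy; rw [himg] at hy
      rcases Finset.mem_insert.mp hy with h | h
      · simp [h]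
      · simp only [Finset.mem_singleton] at h; simp [h, hab]
  · apply le_antisymm
    · apply Finset.max'_le; intro y hy; rw [himg] at hy
      rcases Finset.mem_insert.mp hy with h | h
      · simp [h, hab]
      · simp only [Finset.mem_singleton] at h; simp [h]
    · apply Finset.le_max'; rw [himg]; simp

lemma rot_apply (n k : ℕ) (hk : k < n + 1) :
    finRotate (n + 1) ⟨k, hk⟩ = ⟨(k + 1) % (n + 1), Nat.mod_lt _ (by omega)⟩ := by
  rw [finRotate_succ_apply]
  apply Fin.ext
  simp [Fin.val_add, Nat.add_mod, Nat.mod_mod]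

lemma conv_step (n k : ℕ) (hk2 : k + 2 < n + 1) :
    convPerm (finRotate (n + 1)) {(⟨k, by omega⟩ : Fin (n + 1)), ⟨k + 1, by omega⟩}
      = {(⟨k + 1, by omega⟩ : Fin (n + 1)), ⟨k + 2, by omega⟩} := by
  rw [conv_pair (hab := by
      rw [rot_apply, rot_apply, Fin.le_def]
      simp only
      rw [Nat.mod_eq_of_lt (by omega), Nat.mod_eq_of_lt (by omega)]
      omega)]
  rw [rot_apply, rot_apply]
  ext x
  simp only [Finset.mem_Icc, Finset.mem_insert, Finset.mem_singleton, Fin.le_def, Fin.ext_iff]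
  rw [Nat.mod_eq_of_lt (by omega), Nat.mod_eq_of_lt (by omega)]
  omega

lemma conv_last (n : ℕ) (hn : 1 ≤ n) :
    convPerm (finRotate (n + 1)) {(⟨n - 1, by omega⟩ : Fin (n + 1)), ⟨n, by omega⟩}
      = Finset.univ := by
  rw [Finset.pair_comm]
  rw [conv_pair (hab := by
      rw [rot_apply, rot_apply, Fin.le_def]
      simp only
      rw [Nat.mod_self, Nat.mod_eq_of_lt (by omega)]
      omega)]
  rw [rot_apply, rot_apply]
  ext x
  simp only [Finset.mem_Icc, Finset.mem_univ, iff_true, Fin.le_def]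
  rw [Nat.mod_self, Nat.mod_eq_of_lt (by omega)]
  refine ⟨Nat.zero_le _, ?_⟩
  omega

lemma conv_univ (n : ℕ) :
    convPerm (finRotate (n + 1)) Finset.univ = Finset.univ := by
  apply Finset.Subset.antisymm (Finset.subset_univ _)
  intro x _
  have hne : (Finset.univ : Finset (Fin (n + 1))).Nonempty := ⟨0, Finset.mem_univ _⟩
  rw [convPerm, dif_pos hne]
  have hx : x ∈ (Finset.univ : Finset (Fin (n + 1))).image (finRotate (n + 1)) :=
    Finset.mem_image.mpr ⟨(finRotate (n + 1))⁻¹ x, Finset.mem_univ _, by simp⟩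
  exact Finset.mem_Icc.mpr ⟨Finset.min'_le _ x hx, Finset.le_max' _ x hx⟩

lemma iter_lt (n : ℕ) (i : Fin n) (m : ℕ) (hm : i.val + m + 1 ≤ n) :
    (convPerm (finRotate (n + 1)))^[m] (pairA i)
      = {(⟨i.val + m, by omega⟩ : Fin (n + 1)), ⟨i.val + m + 1, by omega⟩} := by
  induction m with
  | zero =>
      ext x
      simp only [Function.iterate_zero, id_eq, pairA, Finset.mem_insert,
        Finset.mem_singleton, Fin.ext_iff, Fin.coe_castSucc, Fin.val_succ]
      omega
  | succ m ih =>
      rw [Function.iterate_succ_apply', ih (by omega)]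
      rw [conv_step n (i.val + m) (by omega)]
      rfl

lemma iter_full (n : ℕ) (i : Fin n) :
    (convPerm (finRotate (n + 1)))^[n - i.val] (pairA i) = Finset.univ := by
  have hi : i.val < n := i.isLt
  have h1 : n - i.val = (n - i.val - 1) + 1 := by omega
  rw [h1, Function.iterate_succ_apply', iter_lt n i (n - i.val - 1) (by omega)]
  have e1 : (⟨i.val + (n - i.val - 1), by omega⟩ : Fin (n + 1)) = ⟨n - 1, by omega⟩ := by
    apply Fin.ext; simp; omega
  have e2 : (⟨i.val + (n - i.val - 1) + 1, by omega⟩ : Fin (n + 1)) = ⟨n, by omega⟩ := by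
    apply Fin.ext; simp; omega
  rw [e1, e2, conv_last n (by omega)]

lemma charNum_rot (n : ℕ) (i : Fin n) :
    charNum (finRotate (n + 1)) i = n - i.val := by
  have hi : i.val < n := i.isLt
  have hmem : (n - i.val) ∈ {m : ℕ | 1 ≤ m ∧ pairA i ⊆ (convPerm (finRotate (n + 1)))^[m] (pairA i)} := by
    refine ⟨by omega, ?_⟩
    rw [iter_full]
    exact Finset.subset_univ _
  refine le_antisymm (Nat.sInf_le hmem) (le_csInf ⟨_, hmem⟩ ?_)

  rintro m ⟨hm1, hm2⟩
  by_contra h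
  push_neg at h
  rw [iter_lt n i m (by omega)] at hm2
  have hc : i.castSucc ∈ pairA i := Finset.mem_insert_self _ _
  have := hm2 hc
  simp only [Finset.mem_insert, Finset.mem_singleton, Fin.ext_iff, Fin.coe_castSucc] at this
  omega

/-- For the rotation cycle `σ(i) ≡ i + 1 (mod n+1)` (namely `finRotate (n+1)`), the multiset
of characteristic numbers `{m₁,…,m_n}` is exactly `{1, 2, …, n}` (the paper's `{1,…,n-1}`). -/
theorem char_sequence_of_rotation (n : ℕ) (hn : 1 ≤ n) :
    (Finset.univ.val.map fun i : Fin n => charNum (finRotate (n + 1)) i) =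
      (Multiset.range n).map (· + 1) := by
  have h1 : (Finset.univ.val.map fun i : Fin n => charNum (finRotate (n + 1)) i)
      = Finset.univ.val.map (fun i : Fin n => n - i.val) := by
    apply Multiset.map_congr rfl
    intro i _
    exact charNum_rot n i
  rw [h1]
  have nd1 : (Finset.univ.val.map (fun i : Fin n => n - i.val)).Nodup := by
    refine Multiset.Nodup.map_on ?_ Finset.univ.nodup
    intro a _ b _ h
    have ha := a.isLt
    have hb := b.isLt
    apply Fin.ext
    omega
  have nd2 : ((Multiset.range n).map (· + 1)).Nodup :=
    (Multiset.nodup_range n).map (fun h => by omega)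
  rw [Multiset.Nodup.ext nd1 nd2]
  intro a
  simp only [Multiset.mem_map, Finset.mem_val, Finset.mem_univ, true_and, Multiset.mem_range]
  constructor
  · rintro ⟨i, rfl⟩
    have := i.isLt
    exact ⟨n - 1 - i.val, by omega, by omega⟩
  · rintro ⟨k, hk, rfl⟩
    exact ⟨⟨n - (k + 1), by omega⟩, by simp; omega⟩
end

section
/- Let σ be an n-cycle in Sₙ and let T_σ be the (n−1)×(n−1) matrix over 𝔽₂ with (T_σ)_{ij} = 1 iff convσ({j, j+1}) ⊇ {i, i+1}, i.e., iff min σ({j,j+1}) ≤ i and i+1 ≤ max σ({j,j+1}). Then for every positive integer l, T_σ^l = T_{σ^l} as matrices over 𝔽₂. -/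
/-- The `n × n` adjacency matrix of `σ` over `𝔽₂`: `(T_σ)_{ij} = 1` iff `A_i ⊆ convσ(A_j)`. -/
def adjMat {n : ℕ} (σ : Equiv.Perm (Fin (n + 1))) : Matrix (Fin n) (Fin n) (ZMod 2) :=
  Matrix.of fun i j => if pairA i ⊆ convPerm σ (pairA j) then 1 else 0

lemma val_min {N : ℕ} (a b : Fin N) : (min a b).val = min a.val b.val := rfl
lemma val_max {N : ℕ} (a b : Fin N) : (max a b).val = max a.val b.val := rfl

lemma pairA_subset_conv_iff {n : ℕ} (σ : Equiv.Perm (Fin (n + 1))) (i j : Fin n) :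
    pairA i ⊆ convPerm σ (pairA j) ↔
      min (σ j.castSucc).val (σ j.succ).val ≤ i.val ∧
        i.val + 1 ≤ max (σ j.castSucc).val (σ j.succ).val := by
  have hne : (pairA j).Nonempty := ⟨j.castSucc, by simp [pairA]⟩
  have himg : (pairA j).image σ = {σ j.castSucc, σ j.succ} := by
    simp [pairA, Finset.image_insert]
  rw [convPerm, dif_pos hne]
  have hmin : ((pairA j).image σ).min' (hne.image σ) = min (σ j.castSucc) (σ j.succ) := by
    apply le_antisymm
    · apply Finset.min'_le
      rw [himg]
      rcases min_choice (σ j.castSucc) (σ j.succ) with h | h <;> simp [h]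
    · apply Finset.le_min'
      intro y hy
      rw [himg] at hy
      simp only [Finset.mem_insert, Finset.mem_singleton] at hy
      rcases hy with h | h <;> simp [h, min_le_left, min_le_right]
  have hmax : ((pairA j).image σ).max' (hne.image σ) = max (σ j.castSucc) (σ j.succ) := by
    apply le_antisymm
    · apply Finset.max'_le
      intro y hy
      rw [himg] at hy
      simp only [Finset.mem_insert, Finset.mem_singleton] at hy
      rcases hy with h | h <;> simp [h, le_max_left, le_max_right]
    · apply Finset.le_max'
      rw [himg]
      rcases max_choice (σ j.castSucc) (σ j.succ) with h | h <;> simp [h]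
  rw [hmin, hmax]
  simp only [pairA, Finset.insert_subset_iff, Finset.singleton_subset_iff, Finset.mem_Icc,
    Fin.le_def, val_min, val_max, Fin.coe_castSucc, Fin.val_succ]
  omega

lemma adjMat_apply {n : ℕ} (σ : Equiv.Perm (Fin (n + 1))) (i j : Fin n) :
    adjMat σ i j = (if (σ j.castSucc).val ≤ i.val then 1 else 0) +
      (if (σ j.succ).val ≤ i.val then (1 : ZMod 2) else 0) := by
  rw [adjMat]
  simp only [Matrix.of_apply]
  rw [if_congr (pairA_subset_conv_iff σ i j) rfl rfl]
  rcases le_or_gt (σ j.castSucc).val i.val with h1 | h1 <;>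
    rcases le_or_gt (σ j.succ).val i.val with h2 | h2
  · rw [if_neg (by omega), if_pos h1, if_pos h2]; decide
  · rw [if_pos (by omega), if_pos h1, if_neg (by omega)]; rw [add_zero]
  · rw [if_pos (by omega), if_neg (by omega), if_pos h2]; rw [zero_add]
  · rw [if_neg (by omega), if_neg (by omega), if_neg (by omega)]; rw [add_zero]

/-- indicator step function -/
def Gfun {n : ℕ} (σ : Equiv.Perm (Fin (n + 1))) (i : Fin n) (t : ℕ) : ZMod 2 :=
  if ht : t < n + 1 then (if (σ ⟨t, ht⟩).val ≤ i.val then 1 else 0) else 0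

lemma Gfun_fin {n : ℕ} (σ : Equiv.Perm (Fin (n + 1))) (i : Fin n) (x : Fin (n + 1)) :
    Gfun σ i x.val = if (σ x).val ≤ i.val then 1 else 0 := by
  rw [Gfun, dif_pos x.isLt]

lemma telescope (n m M : ℕ) (G : ℕ → ZMod 2) (hmM : m ≤ M) (hMn : M ≤ n) :
    (∑ t ∈ Finset.range n, if m ≤ t ∧ t < M then G (t + 1) + G t else 0) = G M + G m := by
  have h1 : (∑ t ∈ Finset.range n, if m ≤ t ∧ t < M then G (t + 1) + G t else 0)
      = ∑ t ∈ Finset.Ico m M, (G (t + 1) + G t) := by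
    rw [← Finset.sum_filter]
    congr 1
    ext t
    simp only [Finset.mem_filter, Finset.mem_range, Finset.mem_Ico]
    omega
  rw [h1]
  have h2 : ∀ t ∈ Finset.Ico m M, G (t + 1) + G t = G (t + 1) - G t := by
    intro t _
    have : ∀ a b : ZMod 2, a + b = a - b := by decide
    exact this _ _
  rw [Finset.sum_congr rfl h2, Finset.sum_Ico_eq_sub _ hmM,
    Finset.sum_range_sub, Finset.sum_range_sub]
  have : ∀ a b c : ZMod 2, (a - c) - (b - c) = a + b := by decide
  exact this _ _ _

lemma adjMat_mul {n : ℕ} (σ τ : Equiv.Perm (Fin (n + 1))) :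
    adjMat σ * adjMat τ = adjMat (σ * τ) := by
  ext i j
  rw [Matrix.mul_apply]
  have hsum : ∀ k : Fin n, adjMat σ i k * adjMat τ k j =
      (if min (τ j.castSucc).val (τ j.succ).val ≤ k.val ∧
          k.val < max (τ j.castSucc).val (τ j.succ).val then
        Gfun σ i (k.val + 1) + Gfun σ i k.val else 0) := by
    intro k
    rw [adjMat_apply σ i k]
    have h2 : adjMat τ k j = if min (τ j.castSucc).val (τ j.succ).val ≤ k.val ∧
        k.val < max (τ j.castSucc).val (τ j.succ).val then (1 : ZMod 2) else 0 := by
      rw [adjMat]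
      simp only [Matrix.of_apply]
      rw [if_congr (pairA_subset_conv_iff τ k j) rfl rfl]
      congr 1
    rw [h2]
    by_cases hc : min (τ j.castSucc).val (τ j.succ).val ≤ k.val ∧
        k.val < max (τ j.castSucc).val (τ j.succ).val
    · rw [if_pos hc, if_pos hc, mul_one]
      have e1 : Gfun σ i (k.val + 1) = if (σ k.succ).val ≤ i.val then 1 else 0 := by
        have h := Gfun_fin σ i k.succ
        rwa [Fin.val_succ] at h
      have e2 : Gfun σ i k.val = if (σ k.castSucc).val ≤ i.val then 1 else 0 := by
        have h := Gfun_fin σ i k.castSucc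
        rwa [Fin.coe_castSucc] at h
      rw [e1, e2, add_comm]
    · rw [if_neg hc, if_neg hc, mul_zero]
  rw [Finset.sum_congr rfl (fun k _ => hsum k)]
  rw [Fin.sum_univ_eq_sum_range (fun t => if min (τ j.castSucc).val (τ j.succ).val ≤ t ∧
      t < max (τ j.castSucc).val (τ j.succ).val then
      Gfun σ i (t + 1) + Gfun σ i t else 0) n]
  rw [telescope n _ _ (Gfun σ i) (min_le_max)
    (by
      have h1 := (τ j.castSucc).isLt
      have h2 := (τ j.succ).isLt
      omega)]
  rw [adjMat_apply (σ * τ) i j]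
  have e1 : ∀ x : Fin (n + 1), Gfun σ i x.val = if ((σ * τ) (τ.symm x)).val ≤ i.val then 1 else 0 := by
    intro x
    rw [Gfun_fin]
    simp
  rcases le_total (τ j.castSucc).val (τ j.succ).val with h | h
  · rw [max_eq_right h, min_eq_left h, Gfun_fin, Gfun_fin]
    simp only [Equiv.Perm.mul_apply]
    rw [add_comm]
    rfl
  · rw [max_eq_left h, min_eq_right h, Gfun_fin, Gfun_fin]
    simp only [Equiv.Perm.mul_apply]
    rfl

/-- `T_σ ^ l = T_{σ^l}` over `𝔽₂` for a full cycle `σ` and every `l ≥ 1`. -/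
theorem adjMat_pow (n : ℕ) (hn : 1 ≤ n) (σ : Equiv.Perm (Fin (n + 1)))
    (hσ : IsNCycle σ) (l : ℕ) (hl : 1 ≤ l) :
    adjMat σ ^ l = adjMat (σ ^ l) := by
  obtain ⟨k, rfl⟩ := Nat.exists_eq_add_of_le hl
  clear hl
  induction k with
  | zero => simp
  | succ k ih =>
    rw [show 1 + (k + 1) = (1 + k) + 1 from rfl, pow_succ, pow_succ, ih, adjMat_mul]
end

section
/- Let σ be an n-cycle in Sₙ and T_σ its (n−1)×(n−1) adjacency matrix over 𝔽₂, with (T_σ)_{ij} = 1 iff {i,i+1} ⊆ convσ({j,j+1}). Then T_σ^n = I, the identity matrix over 𝔽₂. -/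
namespace AdjAux

variable {n : ℕ}

lemma val_min (a b : Fin (n+1)) : ((min a b : Fin (n+1)) : ℕ) = min (a:ℕ) (b:ℕ) := rfl
lemma val_max (a b : Fin (n+1)) : ((max a b : Fin (n+1)) : ℕ) = max (a:ℕ) (b:ℕ) := rfl

lemma convPerm_pairA (σ : Equiv.Perm (Fin (n+1))) (j : Fin n) :
    convPerm σ (pairA j) =
      Finset.Icc (min (σ j.castSucc) (σ j.succ)) (max (σ j.castSucc) (σ j.succ)) := by
  have hne : (pairA j).Nonempty := ⟨j.castSucc, by simp [pairA]⟩
  have himg : (pairA j).image σ = {σ j.castSucc, σ j.succ} := by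
    simp [pairA, Finset.image_insert]
  rw [convPerm, dif_pos hne]
  congr 1
  · rw [Finset.min'_eq_inf']
    simp [himg, Finset.inf'_insert, min_comm, inf_comm]
  · rw [Finset.max'_eq_sup']
    simp [himg, Finset.sup'_insert, max_comm, sup_comm]

lemma pair_subset_iff (σ : Equiv.Perm (Fin (n+1))) (i j : Fin n) :
    (pairA i ⊆ convPerm σ (pairA j)) ↔
      (((σ j.castSucc : ℕ) ≤ i ∨ (σ j.succ : ℕ) ≤ i) ∧
        ¬((σ j.castSucc : ℕ) ≤ i ∧ (σ j.succ : ℕ) ≤ i)) := by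
  rw [convPerm_pairA]
  simp only [pairA, Finset.insert_subset_iff, Finset.singleton_subset_iff, Finset.mem_Icc,
    Fin.le_def, val_min, val_max, Fin.coe_castSucc, Fin.val_succ]
  omega


def U (n : ℕ) : Matrix (Fin n) (Fin (n+1)) (ZMod 2) :=
  Matrix.of fun i a => if (a:ℕ) ≤ (i:ℕ) then 1 else 0

def M (σ : Equiv.Perm (Fin (n+1))) : Matrix (Fin (n+1)) (Fin n) (ZMod 2) :=
  Matrix.of fun a j => (if a = σ j.castSucc then 1 else 0) + (if a = σ j.succ then 1 else 0)

def P (π : Equiv.Perm (Fin (n+1))) : Matrix (Fin (n+1)) (Fin (n+1)) (ZMod 2) :=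
  Matrix.of fun a b => if b = π a then 1 else 0

def E (σ : Equiv.Perm (Fin (n+1))) : Matrix (Fin (n+1)) (Fin (n+1)) (ZMod 2) :=
  Matrix.of fun a _ => if a = σ (Fin.last n) then 1 else 0

lemma adj_eq_UM (σ : Equiv.Perm (Fin (n+1))) : adjMat σ = U n * M σ := by
  ext i j
  rw [Matrix.mul_apply]
  simp only [U, M, adjMat, Matrix.of_apply, mul_add]
  rw [Finset.sum_add_distrib]
  have h1 : ∀ (c : Fin (n+1)),
      (∑ a : Fin (n+1), (if (a:ℕ) ≤ (i:ℕ) then (1:ZMod 2) else 0) * (if a = c then 1 else 0))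
        = (if (c:ℕ) ≤ (i:ℕ) then 1 else 0) := by
    intro c
    rw [Finset.sum_eq_single c]
    · simp
    · intro b _ hb; simp [hb]
    · simp
  rw [h1, h1]
  simp only [pair_subset_iff]
  by_cases h : (σ j.castSucc : ℕ) ≤ (i:ℕ) <;> by_cases h' : (σ j.succ : ℕ) ≤ (i:ℕ) <;>
    simp [h, h'] <;> decide

lemma sum_castSucc (t : Fin (n+1)) (f : Fin n → ZMod 2) :
    (∑ j : Fin n, if j.castSucc = t then f j else 0) =
      if h : t = Fin.last n then 0 else f (t.castPred h) := by
  split_ifs with h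
  · apply Finset.sum_eq_zero
    intro j _
    rw [if_neg]
    subst h
    exact (Fin.castSucc_lt_last j).ne
  · rw [Finset.sum_eq_single (t.castPred h)]
    · rw [if_pos (Fin.castSucc_castPred t h)]
    · intro b _ hb
      rw [if_neg]
      intro hc
      exact hb (Fin.castSucc_injective n (by rw [hc, Fin.castSucc_castPred t h]))
    · simp

lemma sum_succ (t : Fin (n+1)) (f : Fin n → ZMod 2) :
    (∑ j : Fin n, if j.succ = t then f j else 0) =
      if h : t = 0 then 0 else f (t.pred h) := by
  split_ifs with h
  · apply Finset.sum_eq_zero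
    intro j _
    rw [if_neg]
    subst h
    exact Fin.succ_ne_zero j
  · rw [Finset.sum_eq_single (t.pred h)]
    · rw [if_pos (Fin.succ_pred t h)]
    · intro b _ hb
      rw [if_neg]
      intro hc
      exact hb (Fin.succ_injective n (by rw [hc, Fin.succ_pred t h]))
    · simp

lemma MU_eq (σ : Equiv.Perm (Fin (n+1))) : M σ * U n = P σ⁻¹ + E σ := by
  ext a b
  rw [Matrix.mul_apply, Matrix.add_apply]
  simp only [M, U, P, E, Matrix.of_apply, add_mul]
  rw [Finset.sum_add_distrib]
  have key : ∀ (g : Fin n → Fin (n+1)) (j : Fin n),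
      ((if a = σ (g j) then (1:ZMod 2) else 0) * (if (b:ℕ) ≤ (j:ℕ) then 1 else 0)) =
      (if g j = σ⁻¹ a then (if (b:ℕ) ≤ (j:ℕ) then (1:ZMod 2) else 0) else 0) := by
    intro g j
    have hiff : (a = σ (g j)) ↔ (g j = σ⁻¹ a) := by
      constructor
      · intro h; rw [h]; simp
      · intro h; rw [h]; simp
    by_cases h : g j = σ⁻¹ a
    · rw [if_pos h, if_pos (hiff.mpr h), one_mul]
    · rw [if_neg h, if_neg (fun hc => h (hiff.mp hc)), zero_mul]
  have e1 : (∑ j : Fin n, (if a = σ j.castSucc then (1:ZMod 2) else 0) * (if (b:ℕ) ≤ (j:ℕ) then 1 else 0))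
      = if h : σ⁻¹ a = Fin.last n then 0 else (if (b:ℕ) ≤ ((σ⁻¹ a).castPred h : ℕ) then 1 else 0) := by
    rw [Finset.sum_congr rfl (fun j _ => key (Fin.castSucc) j), sum_castSucc]
  have e2 : (∑ j : Fin n, (if a = σ j.succ then (1:ZMod 2) else 0) * (if (b:ℕ) ≤ (j:ℕ) then 1 else 0))
      = if h : σ⁻¹ a = 0 then 0 else (if (b:ℕ) ≤ ((σ⁻¹ a).pred h : ℕ) then 1 else 0) := by
    rw [Finset.sum_congr rfl (fun j _ => key (Fin.succ) j), sum_succ]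
  rw [e1, e2]
  have hlast : (a = σ (Fin.last n)) ↔ (σ⁻¹ a = Fin.last n) := by
    constructor
    · intro h; rw [h]; simp
    · intro h; rw [← h]; simp
  rw [if_congr hlast rfl rfl]
  have hb := b.isLt
  have htn := (σ⁻¹ a).isLt
  simp only [Fin.ext_iff, Fin.coe_castPred, Fin.coe_pred, Fin.val_last, Fin.val_zero]
  show ((if h : (σ⁻¹ a : ℕ) = n then (0:ZMod 2) else if (b:ℕ) ≤ σ⁻¹ a then 1 else 0) +
      if h : σ⁻¹ a = 0 then 0 else if (b:ℕ) ≤ (σ⁻¹ a : ℕ) - 1 then 1 else 0) =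
    (if (b:ℕ) = σ⁻¹ a then 1 else 0) + if (σ⁻¹ a : ℕ) = n then 1 else 0
  have h0 : ((0 : Fin (n+1)) : ℕ) = 0 := rfl
  have hl : ((Fin.last n : Fin (n+1)) : ℕ) = n := rfl
  split_ifs <;> first | rfl | decide | omega

lemma sum_ind_eq (c : Fin (n+1)) : (∑ b : Fin (n+1), if b = c then (1:ZMod 2) else 0) = 1 := by
  rw [Finset.sum_eq_single c] <;> simp +contextual

lemma sum_ind_eq' (π : Equiv.Perm (Fin (n+1))) (c : Fin (n+1)) :
    (∑ b : Fin (n+1), if c = π b then (1:ZMod 2) else 0) = 1 := by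
  rw [Finset.sum_eq_single (π⁻¹ c)]
  · simp
  · intro b _ hb
    rw [if_neg]
    intro hc
    exact hb (by rw [hc]; simp)
  · simp

lemma E_mul_M (σ : Equiv.Perm (Fin (n+1))) : E σ * M σ = 0 := by
  ext a j
  rw [Matrix.mul_apply]
  simp only [E, M, Matrix.of_apply, Matrix.zero_apply]
  by_cases h : a = σ (Fin.last n)
  · rw [if_pos h]
    simp only [one_mul]
    rw [Finset.sum_add_distrib, sum_ind_eq, sum_ind_eq]
    decide
  · simp [h]

lemma E_mul_P (σ π : Equiv.Perm (Fin (n+1))) : E σ * P π = E σ := by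
  ext a c
  rw [Matrix.mul_apply]
  simp only [E, P, Matrix.of_apply]
  by_cases h : a = σ (Fin.last n)
  · rw [if_pos h]
    simp only [one_mul]
    exact sum_ind_eq' π c
  · simp [h]

lemma E_mul_E (σ : Equiv.Perm (Fin (n+1))) : E σ * E σ = E σ := by
  ext a c
  rw [Matrix.mul_apply]
  simp only [E, Matrix.of_apply]
  by_cases h : a = σ (Fin.last n)
  · rw [if_pos h]
    simp only [one_mul]
    exact sum_ind_eq _
  · simp [h]

lemma P_mul_P (π ρ : Equiv.Perm (Fin (n+1))) : P π * P ρ = P (ρ * π) := by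
  ext a c
  rw [Matrix.mul_apply]
  simp only [P, Matrix.of_apply]
  rw [Finset.sum_eq_single (π a)]
  · simp [Equiv.Perm.mul_apply]
    rfl
  · intro b _ hb
    rw [if_neg hb, zero_mul]
  · simp

lemma P_one : P (1 : Equiv.Perm (Fin (n+1))) = 1 := by
  ext a b
  simp only [P, Matrix.of_apply, Matrix.one_apply, Equiv.Perm.one_apply]
  rw [if_congr eq_comm rfl rfl]
  rfl

lemma P_pow (π : Equiv.Perm (Fin (n+1))) (k : ℕ) : P π ^ k = P (π ^ k) := by
  induction k with
  | zero => rw [pow_zero, pow_zero, P_one]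
  | succ k ih => rw [pow_succ, ih, P_mul_P, ← pow_succ']

lemma UM_pow (σ : Equiv.Perm (Fin (n+1))) (k : ℕ) :
    (U n * M σ) ^ (k + 1) = U n * (M σ * U n) ^ k * M σ := by
  induction k with
  | zero => rw [pow_one, pow_zero, Matrix.mul_one]
  | succ k ih =>
      rw [pow_succ, ih, pow_succ]
      simp only [Matrix.mul_assoc]

lemma add_self (X : Matrix (Fin (n+1)) (Fin (n+1)) (ZMod 2)) : X + X = 0 := by
  ext i j
  rw [Matrix.add_apply]
  exact CharTwo.add_self_eq_zero _

lemma AB_pow (σ : Equiv.Perm (Fin (n+1))) (k : ℕ) :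
    (P σ⁻¹ + E σ) ^ (k + 1) = P σ⁻¹ ^ (k + 1) + P σ⁻¹ ^ k * E σ := by
  set A := P σ⁻¹
  set B := E σ
  have hBA : B * A = B := E_mul_P σ σ⁻¹
  have hBB : B * B = B := E_mul_E σ
  induction k with
  | zero => rw [pow_one, pow_one, pow_zero, one_mul]
  | succ k ih =>
      rw [pow_succ, ih]
      have expand : (A ^ (k+1) + A ^ k * B) * (A + B) =
          A ^ (k + 2) + A ^ (k + 1) * B + (A ^ k * (B * A) + A ^ k * (B * B)) := by
        noncomm_ring
      rw [expand, hBA, hBB, ← mul_add, add_self, mul_zero, add_zero]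

lemma P_mul_M (σ : Equiv.Perm (Fin (n+1))) : P σ * M σ = M 1 := by
  ext a j
  rw [Matrix.mul_apply]
  simp only [P, M, Matrix.of_apply, Equiv.Perm.one_apply]
  rw [Finset.sum_eq_single (σ a)]
  · rw [if_pos rfl, one_mul,
      if_congr (EmbeddingLike.apply_eq_iff_eq σ) rfl rfl,
      if_congr (EmbeddingLike.apply_eq_iff_eq σ) rfl rfl]
    rfl
  · intro b _ hb
    rw [if_neg hb, zero_mul]
  · simp

lemma U_mul_M_one : U n * M (1 : Equiv.Perm (Fin (n+1))) = 1 := by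
  ext i j
  rw [Matrix.mul_apply]
  simp only [U, M, Matrix.of_apply, mul_add]
  rw [Finset.sum_add_distrib]
  have h1 : ∀ (c : Fin (n+1)),
      (∑ a : Fin (n+1), (if (a:ℕ) ≤ (i:ℕ) then (1:ZMod 2) else 0) * (if a = c then 1 else 0))
        = (if (c:ℕ) ≤ (i:ℕ) then 1 else 0) := by
    intro c
    rw [Finset.sum_eq_single c]
    · simp
    · intro b _ hb; simp [hb]
    · simp
  rw [h1, h1, Matrix.one_apply]
  simp only [Equiv.Perm.one_apply, Fin.coe_castSucc, Fin.val_succ, Fin.ext_iff]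
  have := i.isLt
  have := j.isLt
  show ((if (j:ℕ) ≤ i then (1:ZMod 2) else 0) + if (j:ℕ) + 1 ≤ i then 1 else 0) =
    if (i:ℕ) = j then 1 else 0
  split_ifs <;> first | rfl | decide | omega

end AdjAux

open AdjAux in
/-- `T_σ ^ N = I` over `𝔽₂` for an `N`-cycle `σ` (here `N = n + 1`). -/
theorem adjMat_pow_card (n : ℕ) (hn : 1 ≤ n) (σ : Equiv.Perm (Fin (n + 1)))
    (hσ : IsNCycle σ) :
    adjMat σ ^ (n + 1) = 1 := by
  have hord : orderOf σ = n + 1 := by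
    rw [hσ.1.orderOf, hσ.2, Finset.card_univ, Fintype.card_fin]
  have hσpow : σ ^ (n + 1) = 1 := by
    have h := pow_orderOf_eq_one σ
    rwa [hord] at h
  have hτ : (σ⁻¹) ^ n = σ := by
    have h5 : σ ^ n = σ⁻¹ := by
      apply eq_inv_of_mul_eq_one_left
      rw [← pow_succ]
      exact hσpow
    rw [inv_pow, h5, inv_inv]
  obtain ⟨m, rfl⟩ : ∃ m, n = m + 1 := ⟨n - 1, by omega⟩
  calc adjMat σ ^ (m + 1 + 1) = (U (m+1) * M σ) ^ (m + 1 + 1) := by rw [adj_eq_UM]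
    _ = U (m+1) * (M σ * U (m+1)) ^ (m+1) * M σ := UM_pow σ (m+1)
    _ = U (m+1) * (P σ⁻¹ + E σ) ^ (m+1) * M σ := by rw [MU_eq]
    _ = U (m+1) * (P σ⁻¹ ^ (m+1) + P σ⁻¹ ^ m * E σ) * M σ := by rw [AB_pow]
    _ = U (m+1) * (P σ⁻¹ ^ (m+1) * M σ + P σ⁻¹ ^ m * (E σ * M σ)) := by
        rw [Matrix.mul_assoc, Matrix.add_mul, Matrix.mul_assoc]
    _ = U (m+1) * (P σ⁻¹ ^ (m+1) * M σ) := by rw [E_mul_M, Matrix.mul_zero, add_zero]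
    _ = U (m+1) * (P (σ⁻¹ ^ (m+1)) * M σ) := by rw [P_pow]
    _ = U (m+1) * (P σ * M σ) := by rw [hτ]
    _ = U (m+1) * M 1 := by rw [P_mul_M]; rfl
    _ = 1 := U_mul_M_one
end

section
/- Let σ be an n-cycle in Sₙ and T_σ its (n−1)×(n−1) adjacency matrix over 𝔽₂. Then the characteristic polynomial of T_σ over 𝔽₂ equals 1 + λ + λ² + … + λ^{n−1}. -/
namespace AdjAux

/-! ### The factorization `T_σ = B · C` over `𝔽₂` -/

def Bmat (n : ℕ) : Matrix (Fin n) (Fin (n+1)) (ZMod 2) :=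
  Matrix.of fun i k => if (i : ℕ) + 1 ≤ (k : ℕ) then 1 else 0

def Cmat {n : ℕ} (σ : Equiv.Perm (Fin (n + 1))) : Matrix (Fin (n+1)) (Fin n) (ZMod 2) :=
  Matrix.of fun k j => (if k = σ j.castSucc then 1 else 0) + (if k = σ j.succ then 1 else 0)

def Pmat {n : ℕ} (σ : Equiv.Perm (Fin (n + 1))) : Matrix (Fin (n+1)) (Fin (n+1)) (ZMod 2) :=
  Matrix.of fun k l => if σ l = k then 1 else 0

def Umat {n : ℕ} (σ : Equiv.Perm (Fin (n + 1))) : Matrix (Fin (n+1)) (Fin (n+1)) (ZMod 2) :=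
  Matrix.of fun k _ => if k = σ 0 then 1 else 0

lemma min'_pair {α : Type*} [LinearOrder α] {s : Finset α} {a b : α}
    (hs : ∀ x, x ∈ s ↔ x = a ∨ x = b) (h : a ≤ b) (hne : s.Nonempty) : s.min' hne = a := by
  refine le_antisymm (Finset.min'_le _ _ ((hs a).2 (Or.inl rfl))) (Finset.le_min' _ _ _ ?_)
  intro y hy
  rcases (hs y).1 hy with rfl | rfl
  exacts [le_rfl, h]

lemma max'_pair {α : Type*} [LinearOrder α] {s : Finset α} {a b : α}
    (hs : ∀ x, x ∈ s ↔ x = a ∨ x = b) (h : a ≤ b) (hne : s.Nonempty) : s.max' hne = b := by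
  refine le_antisymm (Finset.max'_le _ _ _ ?_) (Finset.le_max' _ _ ((hs b).2 (Or.inr rfl)))
  intro y hy
  rcases (hs y).1 hy with rfl | rfl
  exacts [h, le_rfl]

lemma adjMat_eq_mul {n : ℕ} (σ : Equiv.Perm (Fin (n + 1))) :
    adjMat σ = Bmat n * Cmat σ := by
  ext i j
  have hne : σ j.castSucc ≠ σ j.succ := by
    intro h
    have := σ.injective h
    simp [Fin.ext_iff] at this
  rw [Matrix.mul_apply]
  have hrhs : ∑ k, Bmat n i k * Cmat σ k j
      = (if (i : ℕ) + 1 ≤ (σ j.castSucc : ℕ) then 1 else 0)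
        + (if (i : ℕ) + 1 ≤ (σ j.succ : ℕ) then 1 else 0) := by
    simp only [Bmat, Cmat, Matrix.of_apply, mul_add, mul_ite, mul_one, mul_zero]
    rw [Finset.sum_add_distrib]
    congr 1
    · rw [Finset.sum_eq_single (σ j.castSucc)] <;> simp +contextual [eq_comm]
    · rw [Finset.sum_eq_single (σ j.succ)] <;> simp +contextual [eq_comm]
  rw [hrhs]
  have hA : (pairA j).Nonempty := ⟨j.castSucc, by simp [pairA]⟩
  have himg : (pairA j).image σ = {σ j.castSucc, σ j.succ} := by
    simp [pairA, Finset.image_insert]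
  rw [adjMat, Matrix.of_apply, convPerm, dif_pos hA]
  rcases le_total (σ j.castSucc) (σ j.succ) with h | h
  · have hmin : ((pairA j).image σ).min' (hA.image σ) = σ j.castSucc := by
      exact min'_pair (fun x => by rw [himg]; simp) h _
    have hmax : ((pairA j).image σ).max' (hA.image σ) = σ j.succ := by
      exact max'_pair (fun x => by rw [himg]; simp) h _
    rw [hmin, hmax]
    have hsub : pairA i ⊆ Finset.Icc (σ j.castSucc) (σ j.succ) ↔
        ((σ j.castSucc : ℕ) ≤ (i : ℕ) ∧ (i : ℕ) + 1 ≤ (σ j.succ : ℕ)) := by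
      simp [pairA, Finset.insert_subset_iff, Finset.mem_Icc, Fin.le_def]
      omega
    rw [if_congr hsub rfl rfl]
    have hlt : (σ j.castSucc : ℕ) < (σ j.succ : ℕ) := by
      rcases lt_or_eq_of_le h with h' | h'
      · exact h'
      · exact absurd h' hne
    split_ifs <;> first | rfl | omega | (exfalso; omega) | decide
  · have hmin : ((pairA j).image σ).min' (hA.image σ) = σ j.succ := by
      exact min'_pair (fun x => by rw [himg]; simp [or_comm]) h _
    have hmax : ((pairA j).image σ).max' (hA.image σ) = σ j.castSucc := by
      exact max'_pair (fun x => by rw [himg]; simp [or_comm]) h _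
    rw [hmin, hmax]
    have hsub : pairA i ⊆ Finset.Icc (σ j.succ) (σ j.castSucc) ↔
        ((σ j.succ : ℕ) ≤ (i : ℕ) ∧ (i : ℕ) + 1 ≤ (σ j.castSucc : ℕ)) := by
      simp [pairA, Finset.insert_subset_iff, Finset.mem_Icc, Fin.le_def]
      omega
    rw [if_congr hsub rfl rfl]
    have hlt : (σ j.succ : ℕ) < (σ j.castSucc : ℕ) := by
      rcases lt_or_eq_of_le h with h' | h'
      · exact h'
      · exact absurd h'.symm hne
    split_ifs <;> first | rfl | omega | (exfalso; omega) | decide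

/-! ### `C · B` is a permutation matrix plus a rank-one matrix -/

lemma sum_ite_val {m : ℕ} (p : ℕ) (f : Fin m → ZMod 2) :
    (∑ j : Fin m, if (j : ℕ) = p then f j else 0) = if h : p < m then f ⟨p, h⟩ else 0 := by
  split_ifs with h
  · rw [Finset.sum_eq_single (⟨p, h⟩ : Fin m)]
    · simp
    · intro j _ hj
      rw [if_neg]
      simpa [Fin.ext_iff] using hj
    · simp
  · apply Finset.sum_eq_zero
    intro j _
    rw [if_neg]
    omega

lemma mul_BC {n : ℕ} (σ : Equiv.Perm (Fin (n + 1))) :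
    Cmat σ * Bmat n = Pmat σ + Umat σ := by
  ext k l
  rw [Matrix.mul_apply]
  set a : Fin (n+1) := σ⁻¹ k with ha
  have hk : k = σ a := by simp [ha]
  have h1 : ∀ j : Fin n, (k = σ j.castSucc) ↔ ((j : ℕ) = (a : ℕ)) := by
    intro j
    rw [hk, EmbeddingLike.apply_eq_iff_eq, eq_comm, Fin.ext_iff, Fin.coe_castSucc]
  have h2 : ∀ j : Fin n, (k = σ j.succ) ↔ ((j : ℕ) = (a : ℕ) - 1 ∧ 1 ≤ (a : ℕ)) := by
    intro j
    rw [hk, EmbeddingLike.apply_eq_iff_eq, eq_comm, Fin.ext_iff, Fin.val_succ]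
    omega
  have step : ∑ j : Fin n, Cmat σ k j * Bmat n j l
      = (if h : (a:ℕ) < n then (if (a:ℕ) + 1 ≤ (l:ℕ) then 1 else 0) else 0)
        + (if h : (a:ℕ) - 1 < n then
            (if ((a:ℕ) - 1 + 1 ≤ (l:ℕ) ∧ 1 ≤ (a:ℕ)) then 1 else 0) else 0) := by
    simp only [Cmat, Bmat, Matrix.of_apply, add_mul, ite_mul, one_mul, zero_mul]
    rw [Finset.sum_add_distrib]
    congr 1
    · rw [show (∑ j : Fin n, if k = σ j.castSucc then (if (j:ℕ)+1 ≤ (l:ℕ) then (1:ZMod 2) else 0) else 0)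
          = ∑ j : Fin n, if (j:ℕ) = (a:ℕ) then (if (j:ℕ)+1 ≤ (l:ℕ) then (1:ZMod 2) else 0) else 0 by
        refine Finset.sum_congr rfl fun j _ => ?_
        rw [if_congr (h1 j) rfl rfl]]
      rw [sum_ite_val]
    · rw [show (∑ j : Fin n, if k = σ j.succ then (if (j:ℕ)+1 ≤ (l:ℕ) then (1:ZMod 2) else 0) else 0)
          = ∑ j : Fin n, if (j:ℕ) = (a:ℕ) - 1 then
              (if ((j:ℕ)+1 ≤ (l:ℕ) ∧ 1 ≤ (a:ℕ)) then (1:ZMod 2) else 0) else 0 by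
        refine Finset.sum_congr rfl fun j _ => ?_
        by_cases hj : k = σ j.succ
        · rw [if_pos hj, if_pos ((h2 j).1 hj).1]
          have := (h2 j).1 hj
          rw [if_congr (by omega : ((j:ℕ)+1 ≤ (l:ℕ)) ↔ ((j:ℕ)+1 ≤ (l:ℕ) ∧ 1 ≤ (a:ℕ))) rfl rfl]
        · rw [if_neg hj]
          by_cases hj2 : (j:ℕ) = (a:ℕ) - 1
          · rw [if_pos hj2, if_neg]
            intro hcon
            exact hj ((h2 j).2 ⟨hj2, hcon.2⟩)
          · rw [if_neg hj2]]
      rw [sum_ite_val]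
  rw [step]
  have hrhs : (Pmat σ + Umat σ) k l
      = (if (l:ℕ) = (a:ℕ) then 1 else 0) + (if (a:ℕ) = 0 then 1 else 0) := by
    simp only [Matrix.add_apply, Pmat, Umat, Matrix.of_apply]
    have e1 : (σ l = k) ↔ ((l:ℕ) = (a:ℕ)) := by
      rw [hk, EmbeddingLike.apply_eq_iff_eq, Fin.ext_iff]
    have e2 : (k = σ 0) ↔ ((a:ℕ) = 0) := by
      rw [hk, EmbeddingLike.apply_eq_iff_eq, Fin.ext_iff, Fin.val_zero]
    rw [if_congr e1 rfl rfl, if_congr e2 rfl rfl]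
  rw [hrhs]
  have hal : (a : ℕ) ≤ n := by omega
  have hll : (l : ℕ) ≤ n := by omega
  split_ifs <;> first | rfl | omega | (exfalso; omega) | decide

/-! ### Determinant of `t•1 + P` for a full cycle, in characteristic two -/

lemma perm_cases {m : ℕ} (σ π : Equiv.Perm (Fin (m+1))) (hσ : IsNCycle σ)
    (h : ∀ i, π i = i ∨ π i = σ i) : π = 1 ∨ π = σ := by
  have hfix : ∀ x, σ x ≠ x := fun x =>
    Equiv.Perm.mem_support.mp (by rw [hσ.2]; exact Finset.mem_univ x)
  by_cases hπ : π = 1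
  · exact Or.inl hπ
  right
  have hex : ∃ i, π i ≠ i := by
    by_contra hc
    push_neg at hc
    exact hπ (Equiv.ext hc)
  obtain ⟨i₀, hi₀⟩ := hex
  have hi₀' : π i₀ = σ i₀ := (h i₀).resolve_left hi₀
  have closure : ∀ x, π x = σ x → π (σ x) = σ (σ x) := by
    intro x hx
    rcases h (σ x) with h' | h'
    · exfalso
      apply hfix x
      exact π.injective (by rw [hx, h'])
    · exact h'
  have hpow : ∀ k : ℕ, π ((σ ^ k) i₀) = σ ((σ ^ k) i₀) := by
    intro k
    induction k with
    | zero => simpa using hi₀'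
    | succ k ih =>
      have := closure _ ih
      rw [pow_succ']
      simpa [Equiv.Perm.mul_apply] using this
  ext x
  obtain ⟨k, hk⟩ := hσ.1.exists_pow_eq (hfix i₀) (hfix x)
  rw [← hk]
  exact congrArg Fin.val (hpow k)

variable {R : Type*} [CommRing R] [CharP R 2]

lemma det_smul_one_add_perm {m : ℕ} (σ : Equiv.Perm (Fin (m+1))) (hσ : IsNCycle σ) (t : R) :
    Matrix.det (t • (1 : Matrix (Fin (m+1)) (Fin (m+1)) R)
      + Matrix.of fun k l => if σ l = k then (1:R) else 0) = t ^ (m+1) + 1 := by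
  have hfix : ∀ x, σ x ≠ x := fun x =>
    Equiv.Perm.mem_support.mp (by rw [hσ.2]; exact Finset.mem_univ x)
  have hσ1 : σ ≠ 1 := by
    intro hc
    exact hfix 0 (by rw [hc]; rfl)
  set M : Matrix (Fin (m+1)) (Fin (m+1)) R :=
    t • 1 + Matrix.of fun k l => if σ l = k then (1:R) else 0 with hM
  have hent : ∀ k l, M k l = (if k = l then t else 0) + (if σ l = k then 1 else 0) := by
    intro k l
    simp [hM, Matrix.one_apply, mul_ite]
  rw [Matrix.det_apply]
  have hterm : ∀ π : Equiv.Perm (Fin (m+1)),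
      Equiv.Perm.sign π • ∏ i, M (π i) i = ∏ i, M (π i) i := by
    intro π
    rcases Int.units_eq_one_or (Equiv.Perm.sign π) with h | h <;> rw [h]
    · rw [one_smul]
    · rw [Units.smul_def]
      push_cast
      rw [neg_one_zsmul, CharTwo.neg_eq]
  simp_rw [hterm]
  rw [← Finset.sum_subset (Finset.subset_univ ({1, σ} : Finset (Equiv.Perm (Fin (m+1)))))]
  · rw [Finset.sum_insert (by simpa using fun hc => hσ1 hc.symm), Finset.sum_singleton]
    have h1 : ∏ i, M ((1 : Equiv.Perm (Fin (m+1))) i) i = t ^ (m+1) := by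
      rw [show ∏ i, M ((1 : Equiv.Perm (Fin (m+1))) i) i = ∏ i : Fin (m+1), t from
        Finset.prod_congr rfl fun i _ => by simp [hent, hfix i]]
      simp
    have h2 : ∏ i, M (σ i) i = 1 := by
      rw [show ∏ i, M (σ i) i = ∏ _i : Fin (m+1), (1:R) from
        Finset.prod_congr rfl fun i _ => by simp [hent, hfix i, (hfix i).symm]]
      simp
    rw [h1, h2]
  · intro π _ hπ
    have : ∃ i, π i ≠ i ∧ π i ≠ σ i := by
      by_contra hc
      push_neg at hc
      rcases perm_cases σ π hσ (fun i => by
        by_cases h' : π i = i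
        · exact Or.inl h'
        · exact Or.inr (hc i h')) with h' | h' <;>
        simp [h'] at hπ
    obtain ⟨i, hi1, hi2⟩ := this
    apply Finset.prod_eq_zero (Finset.mem_univ i)
    rw [hent, if_neg hi1, if_neg (fun hc => hi2 hc.symm)]
    simp

/-! ### The fraction field of `𝔽₂[X]` -/

abbrev Kf : Type := FractionRing (Polynomial (ZMod 2))

noncomputable def φf : Polynomial (ZMod 2) →+* Kf := algebraMap (Polynomial (ZMod 2)) Kf

noncomputable def ψf : ZMod 2 →+* Kf := φf.comp Polynomial.C

lemma φf_inj : Function.Injective φf := IsFractionRing.injective (Polynomial (ZMod 2)) Kf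

instance : CharP Kf 2 := charP_of_injective_ringHom ψf.injective 2

noncomputable def tf : Kf := φf Polynomial.X

lemma tf_ne_zero : tf ≠ 0 := by
  intro h
  have := φf_inj (h.trans (map_zero φf).symm)
  exact Polynomial.X_ne_zero this

lemma tf_add_one_ne_zero : tf + 1 ≠ 0 := by
  intro h
  have h2 : φf (Polynomial.X + 1) = φf 0 := by
    rw [map_add, map_one, map_zero]; exact h
  have := φf_inj h2
  have h3 := congrArg (Polynomial.coeff · 1) this
  simp [Polynomial.coeff_one] at h3

lemma tf_pow_add_one_ne_zero (m : ℕ) : tf ^ (m+1) + 1 ≠ 0 := by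
  intro h
  have h2 : φf (Polynomial.X ^ (m+1) + 1) = φf 0 := by
    rw [map_add, map_one, map_zero, map_pow]; exact h
  have := φf_inj h2
  have h3 := congrArg (Polynomial.coeff · (m+1)) this
  simp [Polynomial.coeff_one] at h3

/-- The Weinstein–Aronszajn shift for `det (t•1 + A*B)`. -/
lemma det_shift {n : ℕ} (t : Kf) (ht : t ≠ 0)
    (A : Matrix (Fin n) (Fin (n+1)) Kf) (B : Matrix (Fin (n+1)) (Fin n) Kf) :
    t * Matrix.det (t • (1 : Matrix (Fin n) (Fin n) Kf) + A * B)
      = Matrix.det (t • (1 : Matrix (Fin (n+1)) (Fin (n+1)) Kf) + B * A) := by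
  have h1 : t • (1 : Matrix (Fin n) (Fin n) Kf) + A * B = t • (1 + (t⁻¹ • A) * B) := by
    rw [smul_add, Matrix.smul_mul, smul_smul, mul_inv_cancel₀ ht, one_smul]
  have h2 : t • (1 : Matrix (Fin (n+1)) (Fin (n+1)) Kf) + B * A
      = t • (1 + B * (t⁻¹ • A)) := by
    rw [smul_add, Matrix.mul_smul, smul_smul, mul_inv_cancel₀ ht, one_smul]
  rw [h1, h2, Matrix.det_smul, Matrix.det_smul, Matrix.det_one_add_mul_comm,
    Fintype.card_fin, Fintype.card_fin]
  ring

/-- Rank-one-update determinant. -/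
lemma det_add_rank_one {m : ℕ} (M : Matrix (Fin (m+1)) (Fin (m+1)) Kf)
    (hM : IsUnit M.det) (u : Fin (m+1) → Kf)
    (hrow : ∀ l, (∑ k, M k l) = (tf + 1))
    (husum : (∑ k, u k) = 1) :
    Matrix.det (M + Matrix.of fun k _ => u k)
      = M.det * (1 + (tf + 1)⁻¹) := by
  classical
  set Ucol : Matrix (Fin (m+1)) Unit Kf := Matrix.of fun k _ => u k with hU
  set Vrow : Matrix Unit (Fin (m+1)) Kf := Matrix.of fun _ _ => 1 with hV
  have hUV : (Matrix.of fun k _ => u k : Matrix (Fin (m+1)) (Fin (m+1)) Kf)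
      = Ucol * Vrow := by
    ext k l
    simp [hU, hV, Matrix.mul_apply]
  have hsplit : M + Matrix.of (fun k _ => u k) = M * (1 + M⁻¹ * (Ucol * Vrow)) := by
    rw [Matrix.mul_add, Matrix.mul_one, ← Matrix.mul_assoc, Matrix.mul_nonsing_inv _ hM,
      Matrix.one_mul, hUV]
  have hVM : Vrow * M = (tf + 1) • Vrow := by
    ext _ l
    simp [hV, Matrix.mul_apply, hrow l]
  have hVMinv : Vrow * M⁻¹ = (tf + 1)⁻¹ • Vrow := by
    have h1 : (Vrow * M) * M⁻¹ = Vrow := by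
      rw [Matrix.mul_assoc, Matrix.mul_nonsing_inv _ hM, Matrix.mul_one]
    rw [hVM, Matrix.smul_mul] at h1
    calc Vrow * M⁻¹ = (tf+1)⁻¹ • ((tf+1) • (Vrow * M⁻¹)) := by
          rw [smul_smul, inv_mul_cancel₀ tf_add_one_ne_zero, one_smul]
      _ = (tf+1)⁻¹ • Vrow := by rw [h1]
  have hVU : Vrow * Ucol = Matrix.of fun _ _ => (1 : Kf) := by
    ext _ _
    simp [hV, hU, Matrix.mul_apply, husum]
  rw [hsplit, Matrix.det_mul]
  congr 1
  rw [← Matrix.mul_assoc, Matrix.det_one_add_mul_comm, Matrix.det_unique,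
    Matrix.add_apply, Matrix.one_apply_eq]
  congr 1
  rw [← Matrix.mul_assoc Vrow, hVMinv, Matrix.smul_mul, hVU]
  simp

end AdjAux

set_option maxHeartbeats 1000000 in
/-- The characteristic polynomial of `T_σ` over `𝔽₂` is `1 + λ + λ² + … + λⁿ`
(the paper's `1 + λ + … + λ^(n-1)`). -/
theorem adjMat_charpoly (n : ℕ) (hn : 1 ≤ n) (σ : Equiv.Perm (Fin (n + 1)))
    (hσ : IsNCycle σ) :
    (adjMat σ).charpoly = ∑ i ∈ Finset.range (n + 1), Polynomial.X ^ i := by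
  classical
  open AdjAux in
  -- transfer to the fraction field
  apply φf_inj
  -- `φf` of a charpoly is a determinant over `Kf`
  have transfer : ∀ (m : ℕ) (M : Matrix (Fin m) (Fin m) (ZMod 2)),
      φf M.charpoly = Matrix.det (tf • (1 : Matrix (Fin m) (Fin m) Kf) + M.map ψf) := by
    intro m M
    rw [Matrix.charpoly, RingHom.map_det]
    congr 1
    ext i j
    rw [RingHom.mapMatrix_apply, Matrix.map_apply]
    by_cases hij : i = j
    · subst hij
      rw [Matrix.charmatrix_apply_eq, map_sub, CharTwo.sub_eq_add]
      simp [tf, ψf, Matrix.one_apply]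
    · rw [Matrix.charmatrix_apply_ne _ _ _ hij, map_neg, CharTwo.neg_eq]
      simp [ψf, Matrix.one_apply_ne hij]
  rw [transfer n (adjMat σ)]
  have hRHS : φf (∑ i ∈ Finset.range (n + 1), Polynomial.X ^ i)
      = ∑ i ∈ Finset.range (n + 1), tf ^ i := by
    rw [map_sum]
    exact Finset.sum_congr rfl fun i _ => by rw [map_pow]; rfl
  rw [hRHS]
  set g : Kf := ∑ i ∈ Finset.range (n + 1), tf ^ i with hg
  -- geometric series: (tf + 1) * g = tf^(n+1) + 1
  have hgeom : (tf + 1) * g = tf ^ (n+1) + 1 := by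
    have := geom_sum_mul tf (n+1)
    rw [CharTwo.sub_eq_add, CharTwo.sub_eq_add] at this
    rw [hg, mul_comm]
    exact this
  -- the factorization over Kf
  have hfact : (adjMat σ).map ψf = (Bmat n).map ψf * (Cmat σ).map ψf := by
    rw [adjMat_eq_mul σ, Matrix.map_mul]
  -- the (n+1)×(n+1) determinant
  have hBC : (Cmat σ).map ψf * (Bmat n).map ψf
      = (Pmat σ).map ψf + (Umat σ).map ψf := by
    rw [← Matrix.map_mul, mul_BC σ]
    exact Matrix.map_add ψf (map_add ψf) _ _
  have hPperm : (Pmat σ).map ψf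
      = Matrix.of fun k l => if σ l = k then (1 : Kf) else 0 := by
    ext k l
    simp [Pmat, Matrix.map_apply, apply_ite ψf]
  have hPdet : Matrix.det (tf • (1 : Matrix (Fin (n+1)) (Fin (n+1)) Kf) + (Pmat σ).map ψf)
      = tf ^ (n+1) + 1 := by
    rw [hPperm]
    exact det_smul_one_add_perm σ hσ tf
  set M : Matrix (Fin (n+1)) (Fin (n+1)) Kf := tf • 1 + (Pmat σ).map ψf with hMdef
  have hMunit : IsUnit M.det := by
    rw [hPdet]
    exact isUnit_iff_ne_zero.mpr (tf_pow_add_one_ne_zero n)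
  -- the big determinant
  have hbig : Matrix.det (tf • (1 : Matrix (Fin (n+1)) (Fin (n+1)) Kf)
      + ((Cmat σ).map ψf * (Bmat n).map ψf)) = tf * g := by
    rw [hBC, ← add_assoc, ← hMdef]
    have hU : (Umat σ).map ψf = Matrix.of fun k _ =>
        (if k = σ 0 then (1 : Kf) else 0) := by
      ext k l
      simp [Umat, Matrix.map_apply, apply_ite ψf]
    rw [hU]
    rw [det_add_rank_one M hMunit _ ?_ ?_]
    · rw [hPdet, ← hgeom]
      calc (tf + 1) * g * (1 + (tf + 1)⁻¹)
          = (tf + 1) * g + g * ((tf + 1) * (tf + 1)⁻¹) := by ring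
        _ = (tf + 1) * g + g := by
            rw [mul_inv_cancel₀ tf_add_one_ne_zero, mul_one]
        _ = tf * g + (g + g) := by ring
        _ = tf * g := by rw [CharTwo.add_self_eq_zero, add_zero]
    · intro l
      have hMk : ∀ k, M k l = (if k = l then tf else 0) + (if σ l = k then 1 else 0) := by
        intro k
        simp [hMdef, hPperm, Matrix.one_apply, mul_ite]
      simp_rw [hMk]
      rw [Finset.sum_add_distrib]
      congr 1
      · simp
      · rw [Finset.sum_eq_single (σ l)]
        · simp
        · intro b _ hb
          rw [if_neg (fun h => hb h.symm)]
        · intro h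
          exact absurd (Finset.mem_univ _) h
    · rw [Finset.sum_eq_single (σ 0)]
      · simp
      · intro b _ hb
        rw [if_neg hb]
      · intro h
        exact absurd (Finset.mem_univ _) h
  -- put it together with the shift
  have hshift := det_shift tf tf_ne_zero ((Bmat n).map ψf) ((Cmat σ).map ψf)
  rw [hbig] at hshift
  rw [hfact]
  exact mul_left_cancel₀ tf_ne_zero (by rw [hshift])
end

section
/- Let T be a d×d matrix over 𝔽₂ and suppose the coefficient of λ^{d−i} in det(λI − T) is nonzero for some 1 ≤ i ≤ d. Then there exists an i×i principal submatrix of T with nonzero determinant, and consequently in the directed graph on {1,…,d} with edge j → i when T_{ij} = 1, there exist at least i vertices each lying on a directed cycle of length at most i. -/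
open Matrix Finset Polynomial

lemma det_mixed {d : ℕ} {A : Type*} [CommRing A] (s : Finset (Fin d))
    (M : Matrix (Fin d) (Fin d) A) :
    (Matrix.of fun j k => if j ∈ s then (1 : Matrix (Fin d) (Fin d) A) j k else M j k).det
      = (M.submatrix (fun x : {x : Fin d // ¬ x ∈ s} => (x : Fin d))
          (fun x : {x : Fin d // ¬ x ∈ s} => (x : Fin d))).det := by
  classical
  set B := Matrix.of fun j k => if j ∈ s then (1 : Matrix (Fin d) (Fin d) A) j k else M j k with hB
  set σ := Equiv.sumCompl (fun x : Fin d => x ∈ s) with hσ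
  rw [← Matrix.det_submatrix_equiv_self σ B]
  have : B.submatrix σ σ = Matrix.fromBlocks 1 0
      (M.submatrix (fun x : {x : Fin d // ¬ x ∈ s} => (x : Fin d))
        (fun x : {x : Fin d // x ∈ s} => (x : Fin d)))
      (M.submatrix (fun x : {x : Fin d // ¬ x ∈ s} => (x : Fin d))
        (fun x : {x : Fin d // ¬ x ∈ s} => (x : Fin d))) := by
    ext a b
    cases a with
    | inl a => cases b with
      | inl b =>
        simp only [hB, hσ, Matrix.submatrix_apply, Equiv.sumCompl_apply_inl, Matrix.of_apply, Matrix.fromBlocks_apply₁₁, a.2, if_true, Matrix.one_apply, Subtype.ext_iff]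
      | inr b =>
        have : (a : Fin d) ≠ (b : Fin d) := by
          intro h; exact b.2 (h ▸ a.2)
        simp [hB, hσ, Matrix.one_apply, a.2, this]
    | inr a => cases b with
      | inl b => simp [hB, hσ, a.2]
      | inr b => simp [hB, hσ, a.2]
  rw [this, Matrix.det_fromBlocks_zero₁₂, Matrix.det_one, one_mul]


lemma charpoly_expand (d : ℕ) (T : Matrix (Fin d) (Fin d) (ZMod 2)) :
    T.charpoly = ∑ s : Finset (Fin d),
      X ^ s.card * C ((T.submatrix (fun x : {x : Fin d // ¬ x ∈ s} => (x : Fin d))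
          (fun x : {x : Fin d // ¬ x ∈ s} => (x : Fin d))).det) := by
  classical
  have hchar : charmatrix T
      = (X : (ZMod 2)[X]) • (1 : Matrix (Fin d) (Fin d) (ZMod 2)[X]) + T.map C := by
    ext a b
    simp only [charmatrix_apply, Matrix.sub_apply, Matrix.add_apply, Matrix.smul_apply,
      Matrix.map_apply, Matrix.diagonal_apply, Matrix.one_apply, smul_eq_mul,
      Matrix.scalar_apply, mul_ite, mul_one, mul_zero]
    rw [CharTwo.sub_eq_add]
  rw [Matrix.charpoly, hchar]
  have hdet : ((X : (ZMod 2)[X]) • (1 : Matrix (Fin d) (Fin d) (ZMod 2)[X]) + T.map C).det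
      = (Matrix.detRowAlternating : AlternatingMap _ _ _ _).toMultilinearMap
        (((X : (ZMod 2)[X]) • (1 : Matrix (Fin d) (Fin d) (ZMod 2)[X])) + (T.map C)) := rfl
  rw [hdet]
  refine (MultilinearMap.map_add_univ _ _ _).trans ?_
  refine Finset.sum_congr rfl fun s _ => ?_
  set w : Fin d → Fin d → (ZMod 2)[X] :=
    s.piecewise (fun j => (1 : Matrix (Fin d) (Fin d) (ZMod 2)[X]) j) (fun j => T.map C j)
    with hw
  have hpw : s.piecewise ((X : (ZMod 2)[X]) • (1 : Matrix (Fin d) (Fin d) (ZMod 2)[X]))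
      (T.map C) = s.piecewise (fun j => (X : (ZMod 2)[X]) • w j) w := by
    funext j
    by_cases h : j ∈ s <;> simp [hw, Finset.piecewise, h] <;> rfl
  rw [hpw, MultilinearMap.map_piecewise_smul, Finset.prod_const]
  have hof : Matrix.of w
      = (Matrix.of fun j k => if j ∈ s then (1 : Matrix (Fin d) (Fin d) (ZMod 2)[X]) j k
          else (T.map C) j k) := by
    ext j k
    by_cases h : j ∈ s <;> simp [hw, Finset.piecewise, h]
  have hwof : (Matrix.detRowAlternating : AlternatingMap _ _ _ _).toMultilinearMap w
      = (Matrix.of fun j k => if j ∈ s then (1 : Matrix (Fin d) (Fin d) (ZMod 2)[X]) j k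
          else (T.map C) j k).det := by
    rw [← hof]; rfl
  rw [hwof, det_mixed, Matrix.submatrix_map, smul_eq_mul, ← RingHom.mapMatrix_apply,
    ← RingHom.map_det]

/-- If the coefficient of `λ^(d-i)` in the characteristic polynomial of `T ∈ M_d(𝔽₂)` is
nonzero, then some `i × i` principal submatrix of `T` has nonzero determinant; consequently,
in the directed graph on `{1,…,d}` with an edge `j → i` when `T i j = 1`, at least `i`
vertices lie on a directed cycle of length at most `i`. -/
theorem principal_minor_and_short_cycles (d : ℕ) (T : Matrix (Fin d) (Fin d) (ZMod 2))
    (i : ℕ) (hi1 : 1 ≤ i) (hid : i ≤ d)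
    (hcoeff : T.charpoly.coeff (d - i) ≠ 0) :
    (∃ e : Fin i ↪ Fin d, (T.submatrix e e).det ≠ 0) ∧
      ∃ S : Finset (Fin d), i ≤ S.card ∧
        ∀ v ∈ S, ∃ m : ℕ, 1 ≤ m ∧ m ≤ i ∧ ∃ p : ℕ → Fin d,
          p 0 = v ∧ p m = v ∧ ∀ j < m, T (p (j + 1)) (p j) = 1 := by
  classical
  rw [charpoly_expand, Polynomial.finset_sum_coeff] at hcoeff
  have hcoeff' : ∑ s : Finset (Fin d),
      (if d - i = s.card then
        (T.submatrix (fun x : {x : Fin d // ¬ x ∈ s} => (x : Fin d))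
          (fun x : {x : Fin d // ¬ x ∈ s} => (x : Fin d))).det else 0) ≠ 0 := by
    convert hcoeff using 2 with s
    rw [mul_comm, Polynomial.coeff_C_mul_X_pow]
  obtain ⟨s, -, hne⟩ := Finset.exists_ne_zero_of_sum_ne_zero hcoeff'
  by_cases hc : d - i = s.card
  swap
  · simp [hc] at hne
  rw [if_pos hc] at hne
  -- build the embedding
  have hcards : Fintype.card {x : Fin d // ¬ x ∈ s} = i := by
    have h1 : Fintype.card {x : Fin d // x ∈ s} = s.card := Fintype.card_coe s
    have h2 : Fintype.card {x : Fin d // ¬ x ∈ s}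
        = Fintype.card (Fin d) - Fintype.card {x : Fin d // x ∈ s} :=
      Fintype.card_subtype_compl _
    have h3 : s.card ≤ d := by
      simpa using Finset.card_le_card (Finset.subset_univ s)
    rw [h2, h1, Fintype.card_fin]
    omega
  set e0 : Fin i ≃ {x : Fin d // ¬ x ∈ s} := (Fintype.equivFinOfCardEq hcards).symm with he0
  set f : Fin i ↪ Fin d :=
    ⟨fun k => (e0 k : Fin d), fun a b h => e0.injective (Subtype.ext h)⟩ with hf
  have hdet : (T.submatrix f f).det ≠ 0 := by
    have heq : T.submatrix f f
        = (T.submatrix (fun x : {x : Fin d // ¬ x ∈ s} => (x : Fin d))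
            (fun x : {x : Fin d // ¬ x ∈ s} => (x : Fin d))).submatrix e0 e0 := rfl
    rw [heq, Matrix.det_submatrix_equiv_self]
    exact hne
  refine ⟨⟨f, hdet⟩, Finset.univ.map f, ?_, ?_⟩
  · simp
  -- cycles
  rw [Matrix.det_apply] at hdet
  obtain ⟨σ, -, hσ⟩ := Finset.exists_ne_zero_of_sum_ne_zero hdet
  have hprod : ∏ k, T.submatrix f f (σ k) k ≠ 0 := fun h => hσ (by rw [h, smul_zero])
  have hones : ∀ y : Fin i, T (f (σ y)) (f y) = 1 := by
    intro y
    have h0 := Finset.prod_ne_zero_iff.mp hprod y (Finset.mem_univ y)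
    have h2 : ∀ x : ZMod 2, x ≠ 0 → x = 1 := by decide
    exact h2 _ h0
  intro v hv
  obtain ⟨k, -, hk⟩ := Finset.mem_map.mp hv
  have key : ∀ a b : ℕ, a < b → b ≤ i → (σ ^ a) k = (σ ^ b) k →
      ∃ m : ℕ, 1 ≤ m ∧ m ≤ i ∧ ∃ p : ℕ → Fin d,
        p 0 = v ∧ p m = v ∧ ∀ j < m, T (p (j + 1)) (p j) = 1 := by
    intro a b hab hbi heq
    have hfix : (σ ^ (b - a)) k = k := by
      have h1 : (σ ^ a) ((σ ^ (b - a)) k) = (σ ^ a) k := by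
        rw [← Equiv.Perm.mul_apply, ← pow_add]
        rw [show a + (b - a) = b by omega, heq]
      exact ((σ ^ a).injective h1)
    refine ⟨b - a, by omega, by omega, fun j => f ((σ ^ j) k), ?_, ?_, ?_⟩
    · simp [hk]
    · show f ((σ ^ (b - a)) k) = v
      rw [hfix, hk]
    · intro j _
      have hpow : (σ ^ (j + 1)) k = σ ((σ ^ j) k) := by
        rw [pow_succ', Equiv.Perm.mul_apply]
      show T (f ((σ ^ (j + 1)) k)) (f ((σ ^ j) k)) = 1
      rw [hpow]
      exact hones _
  obtain ⟨a, b, hab, hg⟩ := Fintype.exists_ne_map_eq_of_card_lt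
    (fun j : Fin (i + 1) => (σ ^ (j : ℕ)) k) (by simp)
  rcases hab.lt_or_gt with h | h
  · exact key a b h (by omega) hg
  · exact key b a h (by omega) hg.symm
end
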